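/- arXiv:2207.07692 — 5 statements merged into one kernel-verified Lean document; each statement's English description precedes it below -/
import Mathlib

section
/- Let X ⊆ ℝⁿ be a set, d ∈ ℕ, and suppose X is bi-Lipschitz homeomorphic at infinity to a set A ⊆ ℝᵐ whose d-dimensional Hausdorff measure has polynomial growth of order d, i.e. there is C > 0 with H^d(A ∩ closedBall(0, t)) ≤ C·t^d for all t > 0. If moreover H^d(X ∩ K₀) < ∞ for the excluded compact set K₀ ⊆ ℝⁿ, then there is a constant R > 0 such that H^d(X ∩ closedBall(0, r)) ≤ R·r^d for all r ≥ 1. -/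
/-!
Away from `K₀`, the points of `X` in `closedBall 0 r` are images under the `l`-Lipschitz map `φ`
of points of `A \ K'`, and the lower Lipschitz bound, measured against one fixed point of
`A \ K'`, puts these preimages inside `A ∩ closedBall 0 (l * r + b)`. Hence
`H^d(X ∩ closedBall 0 r) ≤ H^d(X ∩ K₀) + l^d C (l r + b)^d`, which is `O(r^d)` for `r ≥ 1`.
-/

open MeasureTheory
open scoped NNReal ENNReal

open Metric Set in
theorem exists_inter_preimage_closedBall_subset_closedBall {α β : Type*}
    [PseudoMetricSpace α] [PseudoMetricSpace β] {φ : α → β} {s : Set α} {l : ℝ} (hl : 0 ≤ l)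
    (hφ : ∀ p ∈ s, ∀ q ∈ s, dist p q ≤ l * dist (φ p) (φ q)) (x : β) (y : α) :
    ∃ b ≥ 0, ∀ r, s ∩ φ ⁻¹' closedBall x r ⊆ closedBall y (l * r + b) := by
  rcases s.eq_empty_or_nonempty with rfl | ⟨p₀, hp₀⟩
  · exact ⟨0, le_rfl, fun r => by simp⟩
  refine ⟨l * dist (φ p₀) x + dist p₀ y, by positivity, fun r p ⟨hp, hpr⟩ => ?_⟩
  rw [mem_preimage, mem_closedBall] at hpr
  rw [mem_closedBall]
  calc dist p y ≤ dist p p₀ + dist p₀ y := dist_triangle _ _ _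
    _ ≤ l * dist (φ p) (φ p₀) + dist p₀ y := by gcongr; exact hφ p hp p₀ hp₀
    _ ≤ l * (dist (φ p) x + dist (φ p₀) x) + dist p₀ y := by
      gcongr; exact dist_triangle_right _ _ _
    _ ≤ l * r + (l * dist (φ p₀) x + dist p₀ y) := by nlinarith

theorem hausdorffMeasure_inter_le_of_surjOn_of_lipschitzOnWith {α β : Type*}
    [EMetricSpace α] [EMetricSpace β] [MeasurableSpace α] [BorelSpace α] [MeasurableSpace β]
    [BorelSpace β] {φ : α → β} {s : Set α} {X K : Set β} {L : ℝ≥0}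
    (hsurj : Set.SurjOn φ s (X \ K)) (hφ : LipschitzOnWith L φ s) {d : ℝ} (hd : 0 ≤ d)
    (t : Set β) :
    μH[d] (X ∩ t) ≤ μH[d] (X ∩ K) + (L : ℝ≥0∞) ^ d * μH[d] (s ∩ φ ⁻¹' t) := by
  have hcover : X ∩ t ⊆ (X ∩ K) ∪ φ '' (s ∩ φ ⁻¹' t) := by
    rintro x ⟨hxX, hxt⟩
    by_cases hxK : x ∈ K
    · exact Or.inl ⟨hxX, hxK⟩
    · rw [Set.image_inter_preimage]
      exact Or.inr ⟨hsurj ⟨hxX, hxK⟩, hxt⟩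
  calc μH[d] (X ∩ t) ≤ μH[d] (X ∩ K) + μH[d] (φ '' (s ∩ φ ⁻¹' t)) :=
        (measure_mono hcover).trans (measure_union_le _ _)
    _ ≤ μH[d] (X ∩ K) + (L : ℝ≥0∞) ^ d * μH[d] (s ∩ φ ⁻¹' t) := by
        gcongr
        exact (hφ.mono Set.inter_subset_left).hausdorffMeasure_image_le hd

theorem add_mul_add_pow_le_mul_pow {a c l b r : ℝ} (ha : 0 ≤ a) (hc : 0 ≤ c) (hl : 0 ≤ l)
    (hb : 0 ≤ b) (hr : 1 ≤ r) (d : ℕ) :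
    a + c * (l * r + b) ^ d ≤ (a + c * (l + b) ^ d) * r ^ d := by
  have hlin : l * r + b ≤ (l + b) * r := by nlinarith
  calc a + c * (l * r + b) ^ d ≤ a * r ^ d + c * ((l + b) * r) ^ d := by
        gcongr
        exact le_mul_of_one_le_right ha (one_le_pow₀ hr)
    _ = (a + c * (l + b) ^ d) * r ^ d := by rw [mul_pow]; ring

theorem hausdorff_growth_biLip_at_infty_general (n m d : ℕ)
    (X : Set (EuclideanSpace ℝ (Fin n))) (A : Set (EuclideanSpace ℝ (Fin m)))
    (K₀ : Set (EuclideanSpace ℝ (Fin n))) (K' : Set (EuclideanSpace ℝ (Fin m)))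
    (φ : EuclideanSpace ℝ (Fin m) → EuclideanSpace ℝ (Fin n)) (l : ℝ) (hl : 1 ≤ l)
    (hbij : Set.BijOn φ (A \ K') (X \ K₀))
    (hlip : ∀ p ∈ A \ K', ∀ q ∈ A \ K',
      l⁻¹ * ‖p - q‖ ≤ ‖φ p - φ q‖ ∧ ‖φ p - φ q‖ ≤ l * ‖p - q‖)
    (C : ℝ) (hC : 0 < C)
    (hA : ∀ t > (0 : ℝ), μH[(d : ℝ)] (A ∩ Metric.closedBall 0 t) ≤ ENNReal.ofReal (C * t ^ d))
    (hXK : μH[(d : ℝ)] (X ∩ K₀) < ⊤) :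
    ∃ R > (0 : ℝ), ∀ r ≥ (1 : ℝ),
      μH[(d : ℝ)] (X ∩ Metric.closedBall 0 r) ≤ ENNReal.ofReal (R * r ^ d) := by
  have hl0 : 0 < l := zero_lt_one.trans_le hl
  have hφ : LipschitzOnWith l.toNNReal φ (A \ K') :=
    LipschitzOnWith.of_dist_le_mul fun p hp q hq => by
      simpa [Real.coe_toNNReal l hl0.le, dist_eq_norm] using (hlip p hp q hq).2
  have hφ_anti : ∀ p ∈ A \ K', ∀ q ∈ A \ K', dist p q ≤ l * dist (φ p) (φ q) :=
    fun p hp q hq => by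
      simpa only [dist_eq_norm] using (inv_mul_le_iff₀ hl0).1 (hlip p hp q hq).1
  obtain ⟨b, hb, hball⟩ :=
    exists_inter_preimage_closedBall_subset_closedBall hl0.le hφ_anti 0 0
  set M := (μH[(d : ℝ)] (X ∩ K₀)).toReal
  refine ⟨M + C * l ^ d * (l + b) ^ d, by positivity, fun r hr => ?_⟩
  calc μH[(d : ℝ)] (X ∩ Metric.closedBall 0 r)
      ≤ μH[(d : ℝ)] (X ∩ K₀) +
          (l.toNNReal : ℝ≥0∞) ^ (d : ℝ) * μH[(d : ℝ)] ((A \ K') ∩ φ ⁻¹' Metric.closedBall 0 r) :=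
        hausdorffMeasure_inter_le_of_surjOn_of_lipschitzOnWith hbij.surjOn hφ d.cast_nonneg _
    _ ≤ ENNReal.ofReal M + ENNReal.ofReal (l ^ d) * ENNReal.ofReal (C * (l * r + b) ^ d) := by
        rw [ENNReal.rpow_natCast, ENNReal.ofReal_pow hl0.le]
        gcongr ?_ + _ * ?_
        · exact (ENNReal.ofReal_toReal hXK.ne).ge
        · exact (measure_mono fun p hp => show p ∈ A ∩ _ from ⟨hp.1.1, hball r hp⟩).trans
            (hA _ (by positivity))
    _ = ENNReal.ofReal (M + C * l ^ d * (l * r + b) ^ d) := by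
        rw [← ENNReal.ofReal_mul (by positivity),
          ← ENNReal.ofReal_add (by positivity) (by positivity)]
        ring_nf
    _ ≤ ENNReal.ofReal ((M + C * l ^ d * (l + b) ^ d) * r ^ d) :=
        ENNReal.ofReal_le_ofReal <|
          add_mul_add_pow_le_mul_pow (by positivity) (by positivity) hl0.le hb hr d

/-- If `X` is bi-Lipschitz homeomorphic at infinity to a set `A` whose `d`-dimensional
Hausdorff measure grows polynomially of order `d`, and `H^d(X ∩ K₀) < ∞`, then the
`d`-dimensional Hausdorff measure of `X` grows polynomially of order `d`. -/
theorem hausdorff_growth_biLip_at_infty (n m d : ℕ)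
    (X : Set (EuclideanSpace ℝ (Fin n))) (A : Set (EuclideanSpace ℝ (Fin m)))
    (K₀ : Set (EuclideanSpace ℝ (Fin n))) (K' : Set (EuclideanSpace ℝ (Fin m)))
    (hK₀ : IsCompact K₀) (hK' : IsCompact K')
    (φ : EuclideanSpace ℝ (Fin m) → EuclideanSpace ℝ (Fin n)) (l : ℝ) (hl : 1 ≤ l)
    (hbij : Set.BijOn φ (A \ K') (X \ K₀))
    (hlip : ∀ p ∈ A \ K', ∀ q ∈ A \ K',
      l⁻¹ * ‖p - q‖ ≤ ‖φ p - φ q‖ ∧ ‖φ p - φ q‖ ≤ l * ‖p - q‖)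
    (C : ℝ) (hC : 0 < C)
    (hA : ∀ t > (0 : ℝ), μH[(d : ℝ)] (A ∩ Metric.closedBall 0 t) ≤ ENNReal.ofReal (C * t ^ d))
    (hXK : μH[(d : ℝ)] (X ∩ K₀) < ⊤) :
    ∃ R > (0 : ℝ), ∀ r ≥ (1 : ℝ),
      μH[(d : ℝ)] (X ∩ Metric.closedBall 0 r) ≤ ENNReal.ofReal (R * r ^ d) :=
  hausdorff_growth_biLip_at_infty_general n m d X A K₀ K' φ l hl hbij hlip C hC hA hXK
end

section
/- Let X = {(x, y) ∈ ℝ² : y · sin(log(x² + y² + 1)) = 0}. Define t_j = (e^{jπ} − 1)^{1/2} and s_j = (e^{jπ + π/2} − 1)^{1/2}. Then the vector (0,1) belongs to the tangent cone of X at infinity with respect to the sequence (t_j) but not to the tangent cone at infinity with respect to (s_j); in particular the two tangent cones at infinity differ. -/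
/-! The set `X` is the `x`-axis together with the circles `x² + y² = e^{nπ} - 1`, `n ∈ ℤ`.
Along `t_j` the point `t_j • (0,1)` lies on such a circle. Along `s_j` the circle of radius `s_j`
sits halfway (in `log (r² + 1)`) between two consecutive circles of `X`, so no point of `X` off
the axis has `(x² + y²) / s_j²` close to `1`, which `x_j / s_j → (0,1)` would force. -/

open Filter Real Set Topology

/-- The tangent cone at infinity of `X` with respect to a sequence `t` of scales. -/
def tangentConeAtInfty {E : Type*} [NormedAddCommGroup E] [NormedSpace ℝ E]
    (t : ℕ → ℝ) (X : Set E) : Set E :=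
  {v | ∃ x : ℕ → E, (∀ j, x j ∈ X) ∧
    Filter.Tendsto (fun j => (t j)⁻¹ • x j) Filter.atTop (nhds v)}

theorem mem_tangentConeAtInfty_of_smul_mem {E : Type*} [NormedAddCommGroup E] [NormedSpace ℝ E]
    {t : ℕ → ℝ} {X : Set E} {v : E} (hX : ∀ j, t j • v ∈ X) (ht : ∀ᶠ j in atTop, t j ≠ 0) :
    v ∈ tangentConeAtInfty t X :=
  ⟨fun j => t j • v, hX, tendsto_const_nhds.congr' <|
    ht.mono fun j hj => by simp only [smul_smul, inv_mul_cancel₀ hj, one_smul]⟩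

def sinLogZeroSet : Set (ℝ × ℝ) :=
  {p | p.2 * sin (log (p.1 ^ 2 + p.2 ^ 2 + 1)) = 0}

theorem zero_sqrt_exp_sub_one_mem_sinLogZeroSet {θ : ℝ} (hθ : 0 ≤ θ) (hsin : sin θ = 0) :
    ((0 : ℝ), sqrt (exp θ - 1)) ∈ sinLogZeroSet := by
  have hsq : sqrt (exp θ - 1) ^ 2 = exp θ - 1 := sq_sqrt (by linarith [one_le_exp hθ])
  change sqrt (exp θ - 1) * sin (log (0 ^ 2 + sqrt (exp θ - 1) ^ 2 + 1)) = 0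
  rw [hsq, zero_pow two_ne_zero, zero_add, sub_add_cancel, log_exp, hsin, mul_zero]

theorem exists_int_sq_add_sq_eq_of_mem_sinLogZeroSet {p : ℝ × ℝ} (hp : p ∈ sinLogZeroSet)
    (hp₂ : p.2 ≠ 0) : ∃ n : ℤ, p.1 ^ 2 + p.2 ^ 2 = exp (n * π) - 1 := by
  obtain ⟨n, hn⟩ := sin_eq_zero_iff.1 ((mul_eq_zero.1 hp).resolve_left hp₂)
  refine ⟨n, ?_⟩
  rw [hn, exp_log (by positivity)]
  ring

theorem abs_sub_lt_log_two_of_exp_sub_one_div_mem_Ioo {u w : ℝ} (hw : 0 < w)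
    (h : (exp u - 1) / (exp w - 1) ∈ Ioo (1 / 2 : ℝ) 2) : |u - w| < log 2 := by
  have hden : 0 < exp w - 1 := by linarith [add_one_lt_exp hw.ne']
  rw [mem_Ioo, lt_div_iff₀ hden, div_lt_iff₀ hden] at h
  rw [abs_sub_lt_iff]
  constructor
  · -- otherwise `e^u ≥ 2 e^w`
    by_contra! hu
    have := exp_le_exp.2 (le_sub_iff_add_le'.1 hu)
    rw [exp_add, exp_log two_pos] at this
    linarith
  · -- otherwise `e^u ≤ e^w / 2`
    by_contra! hu
    have := exp_le_exp.2 (le_sub_comm.1 hu)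
    rw [exp_sub, exp_log two_pos] at this
    linarith

theorem half_pi_le_abs_int_mul_pi_sub_half_pi (k : ℤ) : π / 2 ≤ |k * π - π / 2| := by
  rcases le_or_gt k 0 with hk | hk
  · have : (k : ℝ) * π ≤ 0 := mul_nonpos_of_nonpos_of_nonneg (by exact_mod_cast hk) pi_pos.le
    rw [abs_of_neg (by linarith [pi_pos])]
    linarith
  · have : π ≤ (k : ℝ) * π := le_mul_of_one_le_left pi_pos.le (by exact_mod_cast hk)
    rw [abs_of_pos (by linarith [pi_pos])]
    linarith

theorem tendsto_inv_mul_snd_and_sq_add_sq {s : ℕ → ℝ} {x : ℕ → ℝ × ℝ}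
    (h : Tendsto (fun j => (s j)⁻¹ • x j) atTop (𝓝 ((0 : ℝ), (1 : ℝ)))) :
    Tendsto (fun j => (s j)⁻¹ * (x j).2) atTop (𝓝 1) ∧
      Tendsto (fun j => ((x j).1 ^ 2 + (x j).2 ^ 2) / s j ^ 2) atTop (𝓝 1) := by
  refine ⟨(continuous_snd.tendsto _).comp h, ?_⟩
  have hq := ((by fun_prop : Continuous fun p : ℝ × ℝ => p.1 ^ 2 + p.2 ^ 2).tendsto _).comp h
  convert hq using 2 with j
  · simp only [Function.comp_apply, Prod.smul_fst, Prod.smul_snd, smul_eq_mul]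
    ring
  · norm_num

theorem notMem_tangentConeAtInfty_sinLogZeroSet {θ : ℕ → ℝ} (hθ : ∀ j, 0 < θ j)
    (hfar : ∀ j (n : ℤ), log 2 ≤ |n * π - θ j|) :
    ((0 : ℝ), (1 : ℝ)) ∉ tangentConeAtInfty (fun j => sqrt (exp (θ j) - 1)) sinLogZeroSet := by
  rintro ⟨x, hxX, hlim⟩
  obtain ⟨hsnd, hq⟩ := tendsto_inv_mul_snd_and_sq_add_sq hlim
  obtain ⟨j, hj₂, hjq⟩ := ((hsnd.eventually_ne one_ne_zero).and
    (hq.eventually (Ioo_mem_nhds (by norm_num : (1 / 2 : ℝ) < 1) one_lt_two))).exists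
  obtain ⟨n, hn⟩ := exists_int_sq_add_sq_eq_of_mem_sinLogZeroSet (hxX j)
    (right_ne_zero_of_mul hj₂)
  rw [hn, sq_sqrt (by linarith [hθ j, add_one_lt_exp (hθ j).ne'])] at hjq
  exact (hfar j n).not_gt (abs_sub_lt_log_two_of_exp_sub_one_div_mem_Ioo (hθ j) hjq)

/-- For `X = {(x,y) : y · sin(log(x² + y² + 1)) = 0}` the tangent cones at infinity with respect
to the sequences `t_j = (e^{jπ} − 1)^{1/2}` and `s_j = (e^{jπ + π/2} − 1)^{1/2}` differ:
`(0,1)` belongs to the first but not the second. -/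
theorem tangent_cone_at_infty_not_unique :
    ((0, 1) : ℝ × ℝ) ∈ tangentConeAtInfty
        (fun j : ℕ => Real.sqrt (Real.exp (j * Real.pi) - 1))
        {p : ℝ × ℝ | p.2 * Real.sin (Real.log (p.1 ^ 2 + p.2 ^ 2 + 1)) = 0} ∧
    ((0, 1) : ℝ × ℝ) ∉ tangentConeAtInfty
        (fun j : ℕ => Real.sqrt (Real.exp (j * Real.pi + Real.pi / 2) - 1))
        {p : ℝ × ℝ | p.2 * Real.sin (Real.log (p.1 ^ 2 + p.2 ^ 2 + 1)) = 0} ∧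
    tangentConeAtInfty (fun j : ℕ => Real.sqrt (Real.exp (j * Real.pi) - 1))
        {p : ℝ × ℝ | p.2 * Real.sin (Real.log (p.1 ^ 2 + p.2 ^ 2 + 1)) = 0} ≠
      tangentConeAtInfty (fun j : ℕ => Real.sqrt (Real.exp (j * Real.pi + Real.pi / 2) - 1))
        {p : ℝ × ℝ | p.2 * Real.sin (Real.log (p.1 ^ 2 + p.2 ^ 2 + 1)) = 0} := by
  have hmem : ((0, 1) : ℝ × ℝ) ∈ tangentConeAtInfty
      (fun j : ℕ => sqrt (exp (j * π) - 1)) sinLogZeroSet := by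
    refine mem_tangentConeAtInfty_of_smul_mem (fun j => ?_) ?_
    · simpa using zero_sqrt_exp_sub_one_mem_sinLogZeroSet (by positivity) (sin_nat_mul_pi j)
    · filter_upwards [eventually_ge_atTop 1] with j hj
      have : 0 < (j : ℝ) * π := mul_pos (by exact_mod_cast hj) pi_pos
      exact (sqrt_pos.2 (by linarith [add_one_lt_exp this.ne'])).ne'
  have hnot : ((0, 1) : ℝ × ℝ) ∉ tangentConeAtInfty
      (fun j : ℕ => sqrt (exp (j * π + π / 2) - 1)) sinLogZeroSet := by
    refine notMem_tangentConeAtInfty_sinLogZeroSet (fun j => by positivity) fun j n => ?_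
    have hgap := half_pi_le_abs_int_mul_pi_sub_half_pi (n - j)
    push_cast at hgap
    calc log 2 ≤ π / 2 := by linarith [log_two_lt_d9, pi_gt_three]
      _ ≤ |n * π - (j * π + π / 2)| := by rwa [sub_mul, sub_sub] at hgap
  exact ⟨hmem, hnot, fun h => hnot (h ▸ hmem)⟩
end

section
/- Let φ : ℝᵖ → ℝᵖ be λ-bi-Lipschitz (with (1/λ)‖x−y‖ ≤ ‖φ(x)−φ(y)‖ ≤ λ‖x−y‖), φ(0) = 0, and define φ_t(v) = (1/t)·φ(t·v) for t > 0. Suppose A ⊆ ℝᵖ, T = (t_j) is a sequence of positive reals with t_j → ∞, and φ_{t_j} converges uniformly on compact sets to a map dφ : ℝᵖ → ℝᵖ. Then dφ(C^T_∞(A)) ⊆ C^T_∞(φ(A)). -/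
open Filter

noncomputable def rescale {E F : Type*} [NormedAddCommGroup E] [NormedSpace ℝ E]
    [NormedAddCommGroup F] [NormedSpace ℝ F] (φ : E → F) (t : ℝ) (v : E) : F :=
  t⁻¹ • φ (t • v)

section

variable {E F : Type*} [NormedAddCommGroup E] [NormedSpace ℝ E]
  [NormedAddCommGroup F] [NormedSpace ℝ F] {φ : E → F}

theorem continuous_rescale (hφ : Continuous φ) (t : ℝ) : Continuous (rescale φ t) := by
  unfold rescale
  fun_prop

theorem rescale_inv_smul {t : ℝ} (ht : t ≠ 0) (x : E) :
    rescale φ t (t⁻¹ • x) = t⁻¹ • φ x := by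
  rw [rescale, smul_smul, mul_inv_cancel₀ ht, one_smul]

theorem image_tangentConeAtInfty_subset {t : ℕ → ℝ} (ht : ∀ j, t j ≠ 0) {dφ : E → F}
    (hφ : Continuous φ) (hconv : TendstoLocallyUniformly (fun j => rescale φ (t j)) dφ atTop)
    (A : Set E) : dφ '' tangentConeAtInfty t A ⊆ tangentConeAtInfty t (φ '' A) := by
  rintro _ ⟨v, ⟨x, hxA, hxv⟩, rfl⟩
  have hdφ : Continuous dφ :=
    hconv.continuous (Frequently.of_forall fun j => continuous_rescale hφ (t j))
  refine ⟨fun j => φ (x j), fun j => ⟨x j, hxA j, rfl⟩, ?_⟩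
  simpa only [rescale_inv_smul (ht _)] using hconv.tendsto_comp hdφ.continuousAt hxv

end

theorem rescaled_biLipschitz_maps_tangent_cone_general (p : ℕ) (l : ℝ)
    (φ : EuclideanSpace ℝ (Fin p) → EuclideanSpace ℝ (Fin p))
    (hlip : ∀ x y : EuclideanSpace ℝ (Fin p),
      l⁻¹ * ‖x - y‖ ≤ ‖φ x - φ y‖ ∧ ‖φ x - φ y‖ ≤ l * ‖x - y‖)
    (A : Set (EuclideanSpace ℝ (Fin p)))
    (t : ℕ → ℝ) (ht : ∀ j, 0 < t j)
    (dφ : EuclideanSpace ℝ (Fin p) → EuclideanSpace ℝ (Fin p))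
    (hconv : ∀ K : Set (EuclideanSpace ℝ (Fin p)), IsCompact K →
      TendstoUniformlyOn (fun j => fun v => (t j)⁻¹ • φ (t j • v)) dφ Filter.atTop K) :
    dφ '' tangentConeAtInfty t A ⊆ tangentConeAtInfty t (φ '' A) := by
  have hφ : Continuous φ := (LipschitzWith.of_dist_le' (K := l) fun x y => by
    simpa only [dist_eq_norm] using (hlip x y).2).continuous
  exact image_tangentConeAtInfty_subset (fun j => (ht j).ne') hφ
    (tendstoLocallyUniformly_iff_forall_isCompact.mpr hconv) A

/-- If the rescalings `φ_{t_j}` of a bi-Lipschitz map `φ` converge uniformly on compact sets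
to `dφ`, then `dφ` maps the tangent cone of `A` at infinity (w.r.t. `T`) into the tangent
cone of `φ(A)` at infinity (w.r.t. `T`). -/
theorem rescaled_biLipschitz_maps_tangent_cone (p : ℕ) (l : ℝ) (hl : 1 ≤ l)
    (φ : EuclideanSpace ℝ (Fin p) → EuclideanSpace ℝ (Fin p)) (hφ0 : φ 0 = 0)
    (hlip : ∀ x y : EuclideanSpace ℝ (Fin p),
      l⁻¹ * ‖x - y‖ ≤ ‖φ x - φ y‖ ∧ ‖φ x - φ y‖ ≤ l * ‖x - y‖)
    (A : Set (EuclideanSpace ℝ (Fin p)))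
    (t : ℕ → ℝ) (ht : ∀ j, 0 < t j) (htop : Filter.Tendsto t Filter.atTop Filter.atTop)
    (dφ : EuclideanSpace ℝ (Fin p) → EuclideanSpace ℝ (Fin p))
    (hconv : ∀ K : Set (EuclideanSpace ℝ (Fin p)), IsCompact K →
      TendstoUniformlyOn (fun j => fun v => (t j)⁻¹ • φ (t j • v)) dφ Filter.atTop K) :
    dφ '' tangentConeAtInfty t A ⊆ tangentConeAtInfty t (φ '' A) :=
  rescaled_biLipschitz_maps_tangent_cone_general p l φ hlip A t ht dφ hconv
end

section
/- The set Y = {(x, y) ∈ ℂ² : y = x²} is not Lipschitz regular at infinity; that is, there is no k and no bi-Lipschitz homeomorphism between Y \ K and ℂᵏ \ K' for compact sets K, K'. -/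
/-!
Suppose `φ` were such a map with constant `l`, and take `p = (t, t²)`, `q = (-t, t²)` for large
`t`. Their images are at most `2lt` apart but at distance `≳ t² / l` from the origin, so the segment
`[φ p, φ q]` misses `K'`. Cutting it into `n ≈ 2l²` equal pieces and pulling back by `φ` gives a
chain in `Y` from `p` to `q` whose steps are at most `t`, so the total variation of its
`y`-coordinate is at most `l‖φ p - φ q‖ ≤ 2l²t < t²`. But the `x`-coordinate must pass from
`Re x > 0` to `Re x < 0` with steps `≤ t`, and that forces `y = x²` to travel at least `t²`.
-/

open Filter Finset Function Metric Set

lemma Nat.exists_lt_and_not_succ {p : ℕ → Prop} {n : ℕ} (h0 : p 0) (hn : ¬ p n) :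
    ∃ j < n, p j ∧ ¬ p (j + 1) := by
  induction n with
  | zero => exact absurd h0 hn
  | succ n ih =>
    by_cases hpn : p n
    · exact ⟨n, n.lt_succ_self, hpn, hn⟩
    · obtain ⟨j, hj, hpj, hpj'⟩ := ih hpn
      exact ⟨j, hj.trans n.lt_succ_self, hpj, hpj'⟩

lemma two_mul_dist_le_sum_dist_of_eq {α : Type*} [PseudoMetricSpace α] (f : ℕ → α) {j n : ℕ}
    (hjn : j ≤ n) (hf : f n = f 0) :
    2 * dist (f j) (f 0) ≤ ∑ i ∈ range n, dist (f (i + 1)) (f i) := by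
  simp_rw [dist_comm (f (_ + 1))]
  rw [← sum_range_add_sum_Ico _ hjn]
  have h₁ := dist_le_range_sum_dist f j
  have h₂ := dist_le_Ico_sum_dist f hjn
  rw [hf] at h₂
  linarith [dist_comm (f 0) (f j)]

/-- If the squares stayed within `t ^ 2 / 2` of `t ^ 2`, then `|Re x j| > t / 2` throughout, so
the sign change of `Re x` between `t` and `-t` would need a step longer than `t`. -/
lemma sq_le_sum_norm_sq_sub_sq {t : ℝ} (ht : 0 < t) (x : ℕ → ℂ) {n : ℕ} (h0 : x 0 = t)
    (hn : x n = -t) (hstep : ∀ j < n, ‖x (j + 1) - x j‖ ≤ t) :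
    t ^ 2 ≤ ∑ j ∈ range n, ‖x (j + 1) ^ 2 - x j ^ 2‖ := by
  by_contra! hsum
  have hre : ∀ j ≤ n, t / 2 < |(x j).re| := by
    intro j hj
    have hdist := two_mul_dist_le_sum_dist_of_eq (fun i => x i ^ 2) hj (by simp [h0, hn])
    simp only [dist_eq_norm, h0] at hdist
    have hre_le := Complex.abs_re_le_norm (x j ^ 2 - (t : ℂ) ^ 2)
    have hsq : (x j ^ 2 - (t : ℂ) ^ 2).re = (x j).re ^ 2 - (x j).im ^ 2 - t ^ 2 := by
      simp [pow_two]
    rw [hsq, abs_le] at hre_le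
    rw [← abs_of_pos (half_pos ht), ← sq_lt_sq]
    nlinarith [sq_nonneg (x j).im]
  obtain ⟨j, hjn, hpos, hnonpos⟩ := Nat.exists_lt_and_not_succ (p := fun j => 0 < (x j).re) (n := n)
    (by simpa [h0] using ht) (by simpa [hn] using ht.le)
  have hj := hre j hjn.le
  have hj' := hre (j + 1) hjn
  rw [abs_of_pos hpos] at hj
  rw [abs_of_nonpos (not_lt.mp hnonpos)] at hj'
  have hgap := Complex.abs_re_le_norm (x (j + 1) - x j)
  rw [Complex.sub_re, abs_le] at hgap
  linarith [hstep j hjn]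

lemma sq_le_mul_of_parabola_chain {t δ : ℝ} (ht : 0 < t) (hδ : δ ≤ t) (w : ℕ → ℂ × ℂ) {n : ℕ}
    (hw : ∀ j ≤ n, (w j).2 = (w j).1 ^ 2) (h0 : (w 0).1 = t) (hn : (w n).1 = -t)
    (hstep : ∀ j < n, ‖w (j + 1) - w j‖ ≤ δ) :
    t ^ 2 ≤ n * δ := by
  have hstep' : ∀ j < n, ‖(w (j + 1)).1 ^ 2 - (w j).1 ^ 2‖ ≤ δ := fun j hj => by
    rw [← hw j hj.le, ← hw (j + 1) hj, ← Prod.snd_sub]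
    exact (norm_snd_le _).trans (hstep j hj)
  calc t ^ 2 ≤ ∑ j ∈ range n, ‖(w (j + 1)).1 ^ 2 - (w j).1 ^ 2‖ :=
        sq_le_sum_norm_sq_sub_sq ht (fun j => (w j).1) h0 hn fun j hj => by
          rw [← Prod.fst_sub]
          exact (norm_fst_le _).trans ((hstep j hj).trans hδ)
    _ ≤ ∑ _j ∈ range n, δ := sum_le_sum fun j hj => hstep' j (mem_range.mp hj)
    _ = n * δ := by simp

lemma segment_subset_compl_closedBall {E : Type*} [SeminormedAddCommGroup E] [NormedSpace ℝ E]
    {a b : E} {R : ℝ} (h : R + ‖b - a‖ < ‖a‖) : segment ℝ a b ⊆ (closedBall 0 R)ᶜ := by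
  intro z hz hzR
  rw [mem_closedBall_zero_iff] at hzR
  have := norm_sub_le_of_mem_segment hz
  have := norm_le_norm_add_norm_sub' a z
  linarith [norm_sub_rev a z]

lemma exists_chain_of_segment_subset_image {X E : Type*} [SeminormedAddCommGroup X]
    [SeminormedAddCommGroup E] [NormedSpace ℝ E] {f : X → E} {s : Set X} {T : Set E} {l : ℝ}
    (hf : BijOn f s T) (hanti : ∀ p ∈ s, ∀ q ∈ s, ‖p - q‖ ≤ l * ‖f p - f q‖)
    {p q : X} (hp : p ∈ s) (hq : q ∈ s) (hseg : segment ℝ (f p) (f q) ⊆ T) {n : ℕ} (hn : n ≠ 0) :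
    ∃ w : ℕ → X, (∀ j ≤ n, w j ∈ s) ∧ w 0 = p ∧ w n = q ∧
      ∀ j < n, ‖w (j + 1) - w j‖ ≤ l * ‖f p - f q‖ / n := by
  set c : ℕ → E := fun j => AffineMap.lineMap (f p) (f q) ((j : ℝ) / n)
  have hc : ∀ j ≤ n, c j ∈ T := fun j hj => hseg <| lineMap_mem_segment ℝ _ _
    ⟨by positivity, div_le_one_of_le₀ (by exact_mod_cast hj) n.cast_nonneg⟩
  set w := fun j => invFunOn f s (c j)
  have hw : ∀ j ≤ n, w j ∈ s ∧ f (w j) = c j := fun j hj =>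
    ⟨invFunOn_mem (hf.surjOn (hc j hj)), invFunOn_eq (hf.surjOn (hc j hj))⟩
  have hn' : (n : ℝ) ≠ 0 := by exact_mod_cast hn
  refine ⟨w, fun j hj => (hw j hj).1, ?_, ?_, fun j hj => ?_⟩
  · exact hf.injOn (hw 0 n.zero_le).1 hp (by simp [(hw 0 n.zero_le).2, c])
  · exact hf.injOn (hw n le_rfl).1 hq (by simp [(hw n le_rfl).2, c, hn'])
  · calc ‖w (j + 1) - w j‖ ≤ l * dist (c (j + 1)) (c j) := by
          rw [← (hw _ hj).2, ← (hw _ hj.le).2]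
          exact (dist_eq_norm (f _) (f _)).symm ▸ hanti _ (hw _ hj).1 _ (hw _ hj.le).1
      _ = l * ‖f p - f q‖ / n := by
          simp only [c]
          rw [dist_lineMap_lineMap, dist_eq_norm (f p), Real.dist_eq, Nat.cast_succ, ← sub_div,
            add_sub_cancel_left, abs_of_pos (by positivity)]
          ring

lemma exists_chain_of_bijOn_compl_closedBall {X E : Type*} [SeminormedAddCommGroup X]
    [SeminormedAddCommGroup E] [NormedSpace ℝ E] {f : X → E} {s : Set X} {K : Set E} {l R : ℝ}
    (hl : 0 < l) (hf : BijOn f s (univ \ K)) (hK : K ⊆ closedBall 0 R)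
    (hlip : ∀ p ∈ s, ∀ q ∈ s, l⁻¹ * ‖p - q‖ ≤ ‖f p - f q‖ ∧ ‖f p - f q‖ ≤ l * ‖p - q‖)
    {p q : X} (hp : p ∈ s) (hq : q ∈ s) (hfar : R + l * ‖p - q‖ < ‖f p‖) {n : ℕ} (hn : n ≠ 0) :
    ∃ w : ℕ → X, (∀ j ≤ n, w j ∈ s) ∧ w 0 = p ∧ w n = q ∧
      ∀ j < n, ‖w (j + 1) - w j‖ ≤ l ^ 2 * ‖p - q‖ / n := by
  have hpq := (hlip p hp q hq).2
  have hseg : segment ℝ (f p) (f q) ⊆ univ \ K := fun y hy =>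
    ⟨mem_univ y, fun hyK => segment_subset_compl_closedBall
      (by rw [norm_sub_rev]; linarith) hy (hK hyK)⟩
  obtain ⟨w, hw, hw0, hwn, hstep⟩ := exists_chain_of_segment_subset_image hf
    (fun p hp q hq => (inv_mul_le_iff₀ hl).mp (hlip p hp q hq).1) hp hq hseg hn
  refine ⟨w, hw, hw0, hwn, fun j hj => (hstep j hj).trans ?_⟩
  rw [sq, mul_assoc]
  gcongr

lemma norm_image_parabola_point_le {E : Type*} [SeminormedAddCommGroup E] [NormedSpace ℝ E]
    {f : ℂ × ℂ → E} {s : Set (ℂ × ℂ)} {K : Set E} {l R t : ℝ} (hl : 0 < l)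
    (hs : ∀ p ∈ s, p.2 = p.1 ^ 2) (hf : BijOn f s (univ \ K)) (hK : K ⊆ closedBall 0 R)
    (hlip : ∀ p ∈ s, ∀ q ∈ s, l⁻¹ * ‖p - q‖ ≤ ‖f p - f q‖ ∧ ‖f p - f q‖ ≤ l * ‖p - q‖)
    (ht : 2 * l ^ 2 < t) (hp : ((t : ℂ), (t : ℂ) ^ 2) ∈ s) (hq : (-(t : ℂ), (t : ℂ) ^ 2) ∈ s) :
    ‖f (t, t ^ 2)‖ ≤ R + l * (2 * t) := by
  by_contra! hfar
  have ht0 : 0 < t := lt_of_le_of_lt (by positivity) ht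
  have hpq : ‖((t : ℂ), (t : ℂ) ^ 2) - (-(t : ℂ), (t : ℂ) ^ 2)‖ = 2 * t := by
    simp only [Prod.mk_sub_mk, sub_self, sub_neg_eq_add, ← two_mul, Prod.norm_mk, norm_zero,
      norm_mul, Complex.norm_of_nonneg ht0.le, Complex.norm_ofNat]
    exact max_eq_left (by positivity)
  set n := ⌈2 * l ^ 2⌉₊
  have hn : 2 * l ^ 2 ≤ n := Nat.le_ceil _
  have hn0 : n ≠ 0 := (Nat.ceil_pos.mpr (by positivity)).ne'
  obtain ⟨w, hw, hw0, hwn, hstep⟩ :=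
    exists_chain_of_bijOn_compl_closedBall hl hf hK hlip hp hq (by rwa [hpq]) hn0
  have hδ : l ^ 2 * (2 * t) / n ≤ t := by
    rw [div_le_iff₀ (by positivity)]
    nlinarith
  have hchain := sq_le_mul_of_parabola_chain ht0 (hpq ▸ hδ) w (fun j hj => hs _ (hw j hj))
    (by rw [hw0]) (by rw [hwn]) hstep
  rw [mul_div_cancel₀ _ (by positivity), hpq] at hchain
  nlinarith

lemma eventually_mul_add_lt_sq (a b : ℝ) : ∀ᶠ t in atTop, a * t + b < t ^ 2 := by
  filter_upwards [eventually_gt_atTop (|a| + |b| + 1)] with t ht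
  nlinarith [le_abs_self a, le_abs_self b, abs_nonneg a, abs_nonneg b]

/-- The parabola `Y = {(x, y) ∈ ℂ² : y = x²}` is not Lipschitz regular at infinity: there is
no bi-Lipschitz homeomorphism between `Y \ K` and `ℝᵏ \ K'` for compact sets `K, K'`. -/
theorem parabola_not_lipschitz_regular_at_infty :
    ¬ ∃ (k : ℕ) (K : Set (ℂ × ℂ)) (K' : Set (EuclideanSpace ℝ (Fin k)))
        (φ : ℂ × ℂ → EuclideanSpace ℝ (Fin k)) (l : ℝ),
      IsCompact K ∧ IsCompact K' ∧ 1 ≤ l ∧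
      Set.BijOn φ ({p : ℂ × ℂ | p.2 = p.1 ^ 2} \ K) (Set.univ \ K') ∧
      ∀ p ∈ {p : ℂ × ℂ | p.2 = p.1 ^ 2} \ K, ∀ q ∈ {p : ℂ × ℂ | p.2 = p.1 ^ 2} \ K,
        l⁻¹ * ‖p - q‖ ≤ ‖φ p - φ q‖ ∧ ‖φ p - φ q‖ ≤ l * ‖p - q‖ := by
  rintro ⟨k, K, K', φ, l, hK, hK', hl, hbij, hlip⟩
  set Y := {p : ℂ × ℂ | p.2 = p.1 ^ 2}
  have hl0 : 0 < l := zero_lt_one.trans_le hl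
  obtain ⟨R, hR, hKR⟩ := hK.isBounded.subset_closedBall_lt 0 0
  obtain ⟨R', hK'R⟩ := hK'.isBounded.subset_closedBall 0
  have hY : ∀ x : ℂ, R < ‖x‖ → (x, x ^ 2) ∈ Y \ K := fun x hx =>
    ⟨rfl, fun hxK => hx.not_ge ((norm_fst_le _).trans (mem_closedBall_zero_iff.mp (hKR hxK)))⟩
  obtain ⟨z, hz⟩ : (Y \ K).Nonempty :=
    ⟨_, hY (R + 1 : ℝ) (by rw [Complex.norm_of_nonneg (by positivity)]; linarith)⟩
  obtain ⟨t, hRt, hlt, hquad⟩ := ((eventually_gt_atTop R).and ((eventually_gt_atTop (2 * l ^ 2)).and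
    (eventually_mul_add_lt_sq (2 * l ^ 2) (l * (R' + ‖φ z‖) + ‖z‖)))).exists
  have htnorm : ‖(t : ℂ)‖ = t := Complex.norm_of_nonneg (hR.trans hRt).le
  have hp := hY t (by rwa [htnorm])
  have hq := neg_sq (t : ℂ) ▸ hY (-t) (by rwa [norm_neg, htnorm])
  have hlinear := norm_image_parabola_point_le hl0 (fun p hp => hp.1) hbij hK'R hlip hlt hp hq
  have hquadratic : t ^ 2 - ‖z‖ ≤ l * (‖φ (t, t ^ 2)‖ + ‖φ z‖) := calc
    t ^ 2 - ‖z‖ = ‖((t : ℂ), (t : ℂ) ^ 2).2‖ - ‖z‖ := by simp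
    _ ≤ ‖((t : ℂ), (t : ℂ) ^ 2) - z‖ :=
      (sub_le_sub_right (norm_snd_le _) _).trans (norm_sub_norm_le _ _)
    _ ≤ l * ‖φ (t, t ^ 2) - φ z‖ := (inv_mul_le_iff₀ hl0).mp (hlip _ hp _ hz).1
    _ ≤ l * (‖φ (t, t ^ 2)‖ + ‖φ z‖) := by gcongr; exact norm_sub_le _ _
  nlinarith [mul_le_mul_of_nonneg_left hlinear hl0.le]
end

section
/- The set X = {(x₁, …, xₙ, x_{n+1}) ∈ ℝ^{n+1} : x₁² + ⋯ + xₙ² = x_{n+1}³}, for n ≥ 1, is Lipschitz regular at infinity: the projection π(x₁,…,xₙ,x_{n+1}) = (x₁,…,xₙ) restricts to a bi-Lipschitz homeomorphism from X \ K onto ℝⁿ \ K' for suitable compact sets K, K'. -/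
/-!
On the cusp `|y|² = t³` the height is `t = |y|^{2/3}`, and `a ↦ a^{2/3}` is `1`-Lipschitz on
`[1, ∞)`. So outside the compact piece `|y| ≤ 1` the hypersurface is the graph over `{|y| > 1}` of
a `1`-Lipschitz function, and the projection onto the graph's domain is bi-Lipschitz with
constant `√2 ≤ 2`.
-/

/-- The projection forgetting the last coordinate. -/
def projE (n : ℕ) (x : EuclideanSpace ℝ (Fin (n + 1))) : EuclideanSpace ℝ (Fin n) :=
  WithLp.toLp 2 (fun i => x (Fin.castSucc i))

theorem one_le_of_pow_three_eq_sq {s a : ℝ} (ha : 1 ≤ a) (hs : s ^ 3 = a ^ 2) : 1 ≤ s := by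
  nlinarith [sq_nonneg (s - 1), sq_nonneg (s + 1), sq_nonneg s]

theorem le_sq_of_pow_three_eq_sq {s a : ℝ} (ha : 1 ≤ a) (hs : s ^ 3 = a ^ 2) : a ≤ s ^ 2 := by
  nlinarith [one_le_of_pow_three_eq_sq ha hs, sq_nonneg (s ^ 2 - a)]

/-- Factor `s³ - t³ = a² - b²` and use `a + b ≤ s² + s t + t²`. -/
theorem abs_sub_le_of_pow_three_eq_sq {s t a b : ℝ} (ha : 1 ≤ a) (hb : 1 ≤ b)
    (hs : s ^ 3 = a ^ 2) (ht : t ^ 3 = b ^ 2) : |s - t| ≤ |a - b| := by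
  have hst : 0 ≤ s * t :=
    mul_nonneg (by linarith [one_le_of_pow_three_eq_sq ha hs])
      (by linarith [one_le_of_pow_three_eq_sq hb ht])
  have hsum : a + b ≤ s ^ 2 + s * t + t ^ 2 := by
    linarith [le_sq_of_pow_three_eq_sq ha hs, le_sq_of_pow_three_eq_sq hb ht]
  have hfactor : |s - t| * (s ^ 2 + s * t + t ^ 2) = |a - b| * (a + b) := by
    rw [← abs_of_nonneg (by linarith : (0 : ℝ) ≤ s ^ 2 + s * t + t ^ 2),
      ← abs_of_nonneg (by linarith : (0 : ℝ) ≤ a + b), ← abs_mul, ← abs_mul]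
    congr 1
    linear_combination hs - ht
  by_contra! h
  nlinarith [abs_nonneg (a - b)]

namespace projE

variable {n : ℕ}

theorem continuous : Continuous (projE n) :=
  (PiLp.continuous_toLp 2 _).comp (continuous_pi fun _ => PiLp.continuous_apply 2 _ _)

theorem sub (p q : EuclideanSpace ℝ (Fin (n + 1))) :
    projE n (p - q) = projE n p - projE n q := rfl

theorem norm_sq_eq_sum (x : EuclideanSpace ℝ (Fin (n + 1))) :
    ‖projE n x‖ ^ 2 = ∑ i : Fin n, x (Fin.castSucc i) ^ 2 :=
  EuclideanSpace.real_norm_sq_eq _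

theorem norm_sq_add_sq_last (x : EuclideanSpace ℝ (Fin (n + 1))) :
    ‖projE n x‖ ^ 2 + x (Fin.last n) ^ 2 = ‖x‖ ^ 2 := by
  rw [norm_sq_eq_sum, EuclideanSpace.real_norm_sq_eq, Fin.sum_univ_castSucc]

theorem norm_le (x : EuclideanSpace ℝ (Fin (n + 1))) : ‖projE n x‖ ≤ ‖x‖ :=
  (pow_le_pow_iff_left₀ (norm_nonneg _) (norm_nonneg _) two_ne_zero).1 <| by
    rw [← norm_sq_add_sq_last x]
    exact le_add_of_nonneg_right (sq_nonneg _)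

theorem norm_le_two_mul {x : EuclideanSpace ℝ (Fin (n + 1))}
    (h : |x (Fin.last n)| ≤ ‖projE n x‖) : ‖x‖ ≤ 2 * ‖projE n x‖ :=
  (pow_le_pow_iff_left₀ (norm_nonneg _) (by positivity) two_ne_zero).1 <| by
    have hlast : x (Fin.last n) ^ 2 ≤ ‖projE n x‖ ^ 2 := sq_le_sq.2 (h.trans (le_abs_self _))
    nlinarith [norm_sq_add_sq_last x, sq_nonneg ‖projE n x‖]

end projE

def cuspHypersurface (n : ℕ) : Set (EuclideanSpace ℝ (Fin (n + 1))) :=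
  {x | ‖projE n x‖ ^ 2 = x (Fin.last n) ^ 3}

namespace cuspHypersurface

variable {n : ℕ}

theorem eq_setOf_sum : cuspHypersurface n =
    {x : EuclideanSpace ℝ (Fin (n + 1)) |
      ∑ i : Fin n, x (Fin.castSucc i) ^ 2 = x (Fin.last n) ^ 3} := by
  simp only [cuspHypersurface, projE.norm_sq_eq_sum]

theorem isClosed : IsClosed (cuspHypersurface n) :=
  isClosed_eq (projE.continuous.norm.pow 2) ((PiLp.continuous_apply 2 _ _).pow 3)

theorem norm_le_two {x : EuclideanSpace ℝ (Fin (n + 1))} (hx : x ∈ cuspHypersurface n)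
    (h : ‖projE n x‖ ≤ 1) : ‖x‖ ≤ 2 := by
  have hcube : x (Fin.last n) ^ 3 ≤ 1 := by
    rw [← hx]
    exact pow_le_one₀ (norm_nonneg _) h
  have hlast_nonneg : 0 ≤ x (Fin.last n) :=
    (Odd.pow_nonneg_iff (n := 3) (by decide)).1 (hx ▸ sq_nonneg _)
  have hlast : x (Fin.last n) ≤ 1 :=
    (pow_le_one_iff_of_nonneg hlast_nonneg three_ne_zero).1 hcube
  have := projE.norm_sq_add_sq_last x
  nlinarith [norm_nonneg x, norm_nonneg (projE n x)]

theorem isCompact_inter_preimage_closedBall :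
    IsCompact (cuspHypersurface n ∩ projE n ⁻¹' Metric.closedBall 0 1) :=
  (isCompact_closedBall 0 2).of_isClosed_subset
    (isClosed.inter (Metric.isClosed_closedBall.preimage projE.continuous))
    fun _ ⟨hx, h⟩ => mem_closedBall_zero_iff.2 (norm_le_two hx (mem_closedBall_zero_iff.1 h))

theorem abs_last_sub_le {p q : EuclideanSpace ℝ (Fin (n + 1))}
    (hp : p ∈ cuspHypersurface n) (hq : q ∈ cuspHypersurface n)
    (hp1 : 1 ≤ ‖projE n p‖) (hq1 : 1 ≤ ‖projE n q‖) :
    |p (Fin.last n) - q (Fin.last n)| ≤ ‖projE n p - projE n q‖ :=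
  (abs_sub_le_of_pow_three_eq_sq hp1 hq1 hp.symm hq.symm).trans (abs_norm_sub_norm_le _ _)

theorem norm_sub_le_two_mul {p q : EuclideanSpace ℝ (Fin (n + 1))}
    (hp : p ∈ cuspHypersurface n) (hq : q ∈ cuspHypersurface n)
    (hp1 : 1 ≤ ‖projE n p‖) (hq1 : 1 ≤ ‖projE n q‖) :
    ‖p - q‖ ≤ 2 * ‖projE n p - projE n q‖ := by
  rw [← projE.sub]
  exact projE.norm_le_two_mul (abs_last_sub_le hp hq hp1 hq1)

theorem exists_projE_eq (y : EuclideanSpace ℝ (Fin n)) :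
    ∃ x ∈ cuspHypersurface n, projE n x = y := by
  set t := (‖y‖ ^ 2) ^ (3⁻¹ : ℝ)
  have ht : t ^ 3 = ‖y‖ ^ 2 := by
    rw [← Real.rpow_natCast, ← Real.rpow_mul (by positivity)]
    norm_num
  refine ⟨WithLp.toLp 2 (Fin.snoc (fun i => y i) t), ?_, ?_⟩
  · simp [cuspHypersurface, projE, ht]
  · ext i
    simp [projE]

end cuspHypersurface

theorem cusp_hypersurface_lipschitz_regular_at_infty_general (n : ℕ)
    (X : Set (EuclideanSpace ℝ (Fin (n + 1))))
    (hX : X = {x : EuclideanSpace ℝ (Fin (n + 1)) |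
      ∑ i : Fin n, x (Fin.castSucc i) ^ 2 = x (Fin.last n) ^ 3}) :
    ∃ (K : Set (EuclideanSpace ℝ (Fin (n + 1)))) (K' : Set (EuclideanSpace ℝ (Fin n))),
      IsCompact K ∧ IsCompact K' ∧
      Set.BijOn (projE n) (X \ K) (Set.univ \ K') ∧
      ∃ l : ℝ, 1 ≤ l ∧ ∀ p ∈ X \ K, ∀ q ∈ X \ K,
        l⁻¹ * ‖p - q‖ ≤ ‖projE n p - projE n q‖ ∧ ‖projE n p - projE n q‖ ≤ l * ‖p - q‖ := by
  rw [← cuspHypersurface.eq_setOf_sum] at hX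
  subst hX
  set K := cuspHypersurface n ∩ projE n ⁻¹' Metric.closedBall 0 1
  have mem_outside {p : EuclideanSpace ℝ (Fin (n + 1))} :
      p ∈ cuspHypersurface n \ K ↔ p ∈ cuspHypersurface n ∧ 1 < ‖projE n p‖ := by
    simp +contextual [K]
  have lower : ∀ p ∈ cuspHypersurface n \ K, ∀ q ∈ cuspHypersurface n \ K,
      ‖p - q‖ ≤ 2 * ‖projE n p - projE n q‖ := fun p hp q hq =>
    cuspHypersurface.norm_sub_le_two_mul (mem_outside.1 hp).1 (mem_outside.1 hq).1
      (mem_outside.1 hp).2.le (mem_outside.1 hq).2.le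
  refine ⟨K, Metric.closedBall 0 1, cuspHypersurface.isCompact_inter_preimage_closedBall,
    isCompact_closedBall 0 1, ⟨fun p hp => ?_, fun p hp q hq hpq => ?_, fun y hy => ?_⟩, 2,
    one_le_two, fun p hp q hq => ⟨?_, ?_⟩⟩
  · simpa using (mem_outside.1 hp).2
  · simpa [hpq, sub_eq_zero] using lower p hp q hq
  · obtain ⟨x, hx, rfl⟩ := cuspHypersurface.exists_projE_eq y
    exact ⟨x, mem_outside.2 ⟨hx, by simpa using hy.2⟩, rfl⟩
  · rw [inv_mul_le_iff₀ two_pos]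
    exact lower p hp q hq
  · rw [← projE.sub]
    exact (projE.norm_le _).trans (le_mul_of_one_le_left (norm_nonneg _) one_le_two)

/-- The hypersurface `x₁² + ⋯ + xₙ² = x_{n+1}³` in `ℝ^{n+1}` is Lipschitz regular at
infinity: the projection to the first `n` coordinates restricts to a bi-Lipschitz
homeomorphism from `X \ K` onto `ℝⁿ \ K'` for suitable compact sets `K, K'`. -/
theorem cusp_hypersurface_lipschitz_regular_at_infty (n : ℕ) (hn : 1 ≤ n)
    (X : Set (EuclideanSpace ℝ (Fin (n + 1))))
    (hX : X = {x : EuclideanSpace ℝ (Fin (n + 1)) |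
      ∑ i : Fin n, x (Fin.castSucc i) ^ 2 = x (Fin.last n) ^ 3}) :
    ∃ (K : Set (EuclideanSpace ℝ (Fin (n + 1)))) (K' : Set (EuclideanSpace ℝ (Fin n))),
      IsCompact K ∧ IsCompact K' ∧
      Set.BijOn (projE n) (X \ K) (Set.univ \ K') ∧
      ∃ l : ℝ, 1 ≤ l ∧ ∀ p ∈ X \ K, ∀ q ∈ X \ K,
        l⁻¹ * ‖p - q‖ ≤ ‖projE n p - projE n q‖ ∧ ‖projE n p - projE n q‖ ≤ l * ‖p - q‖ :=
  cusp_hypersurface_lipschitz_regular_at_infty_general n X hX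
end
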